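/- Let n ≥ 1, b > 0 and A > 0 with bA ≥ n, and let r_1, ..., r_n be nonnegative integers. The integral over the polydisc {|y_1| < 1, ..., |y_n| < 1} ⊂ ℂⁿ of ∏_{k=1}^n |y_k|^{2 r_k} · |y|^{-2bA} (with |y| the Euclidean norm and integration with respect to Lebesgue measure on ℂⁿ ≅ ℝ^{2n}) is finite if and only if ∑_{j=1}^n r_j ≥ ⌊bA⌋ - n + 1. -/

import Mathlib

/-!
The integrand is homogeneous of degree `2 ∑ r - 2bA` on `ℂⁿ ≅ ℝ²ⁿ`. If `bA < ∑ r + n` it is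
dominated by a power `‖y‖ ^ (-α)` with `α < 2n`, hence integrable near the origin. Conversely,
when the degree is at most `-2n`, the substitution `y ↦ y / 2` shows that the integral over the
unit ball is at most the integral over the half ball, so a nonnegative homogeneous integrand
vanishes a.e. on the shell between them; ours is positive on an open subset of that shell.
-/

open MeasureTheory Metric Module

section Homogeneous

variable {E : Type*} [NormedAddCommGroup E] [NormedSpace ℝ E] [FiniteDimensional ℝ E]
  [MeasurableSpace E] [BorelSpace E] {μ : Measure E} [μ.IsAddHaarMeasure]

theorem ae_eq_zero_on_shell_of_homogeneous {f : E → ℝ} {α r : ℝ} (hr : 0 < r)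
    (hα : (finrank ℝ E : ℝ) ≤ α) (hf_nonneg : ∀ x, 0 ≤ f x)
    (hf_hom : ∀ t : ℝ, 0 < t → ∀ x, f (t • x) = t ^ (-α) * f x)
    (hf : IntegrableOn f (ball 0 r) μ) :
    f =ᵐ[μ.restrict (ball 0 r \ ball 0 (r / 2))] 0 := by
  set I := ∫ x in ball 0 r, f x ∂μ
  set J := ∫ x in ball 0 (r / 2), f x ∂μ
  have hsub : ball (0 : E) (r / 2) ⊆ ball 0 r := ball_subset_ball (by linarith)
  have hscale : (2 : ℝ) ^ α * I = 2 ^ finrank ℝ E * J := by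
    have h := Measure.setIntegral_comp_smul_of_pos μ f (ball 0 r) (inv_pos.2 two_pos)
    rw [_root_.smul_ball (inv_ne_zero two_ne_zero), smul_zero, norm_inv, Real.norm_two,
      inv_mul_eq_div] at h
    simpa only [hf_hom _ (inv_pos.2 two_pos), integral_const_mul, smul_eq_mul, inv_pow, inv_inv,
      Real.inv_rpow zero_le_two, Real.rpow_neg zero_le_two] using h
  have hIJ : I ≤ J := by
    have h2 : (2 : ℝ) ^ finrank ℝ E ≤ 2 ^ α := by
      rw [← Real.rpow_natCast]; exact Real.rpow_le_rpow_of_exponent_le one_le_two hα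
    have hI : 0 ≤ I := setIntegral_nonneg measurableSet_ball fun x _ => hf_nonneg x
    nlinarith [pow_pos (two_pos (α := ℝ)) (finrank ℝ E)]
  have hshell : ∫ x in ball 0 r \ ball 0 (r / 2), f x ∂μ = 0 := by
    have hJI : J ≤ I := setIntegral_mono_set hf (ae_of_all _ fun x => hf_nonneg x) hsub.eventuallyLE
    rw [setIntegral_sdiff measurableSet_ball hf hsub]
    linarith
  exact (setIntegral_eq_zero_iff_of_nonneg_ae (ae_of_all _ fun x => hf_nonneg x)
    (hf.mono_set Set.sdiff_subset)).1 hshell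

end Homogeneous

section Polydisc

variable {n : ℕ}

lemma finrank_real_fin_fun_complex : finrank ℝ (Fin n → ℂ) = 2 * n := by
  simp [Module.finrank_pi_fintype, Complex.finrank_real_complex, mul_comm]

/-- The Euclidean norm is written out since `Fin n → ℂ` carries the sup norm, for which `ball 0 1`
is the unit polydisc. -/
noncomputable def monomialNormRpow (a : Fin n → ℕ) (p : ℝ) (y : Fin n → ℂ) : ℝ :=
  (∏ k, ‖y k‖ ^ a k) * √(∑ k, ‖y k‖ ^ 2) ^ (-p)

variable (a : Fin n → ℕ) (p : ℝ)

lemma norm_le_sqrt_sum_sq (y : Fin n → ℂ) : ‖y‖ ≤ √(∑ k, ‖y k‖ ^ 2) := by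
  rw [pi_norm_le_iff_of_nonneg (Real.sqrt_nonneg _)]
  exact fun k => Real.le_sqrt_of_sq_le
    (Finset.single_le_sum (fun j _ => sq_nonneg ‖y j‖) (Finset.mem_univ k))

lemma monomialNormRpow_nonneg (y : Fin n → ℂ) : 0 ≤ monomialNormRpow a p y := by
  unfold monomialNormRpow; positivity

lemma measurable_monomialNormRpow : Measurable (monomialNormRpow a p) := by
  unfold monomialNormRpow; fun_prop

lemma monomialNormRpow_smul {t : ℝ} (ht : 0 < t) (y : Fin n → ℂ) :
    monomialNormRpow a p (t • y) = t ^ (-(p - ∑ k, (a k : ℝ))) * monomialNormRpow a p y := by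
  have hnorm : ∀ k, ‖(t • y) k‖ = t * ‖y k‖ := fun k => by
    rw [Pi.smul_apply, norm_smul, Real.norm_of_nonneg ht.le]
  have hsqrt : √(∑ k, ‖(t • y) k‖ ^ 2) = t * √(∑ k, ‖y k‖ ^ 2) := by
    simp_rw [hnorm, mul_pow, ← Finset.mul_sum]
    rw [Real.sqrt_mul (by positivity), Real.sqrt_sq ht.le]
  rw [monomialNormRpow, monomialNormRpow, hsqrt, Real.mul_rpow ht.le (Real.sqrt_nonneg _)]
  simp only [hnorm, mul_pow, Finset.prod_mul_distrib, Finset.prod_pow_eq_pow_sum]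
  rw [neg_sub, Real.rpow_sub ht, Real.rpow_neg ht.le, ← Nat.cast_sum, Real.rpow_natCast]
  ring

lemma monomialNormRpow_le_norm_rpow (hp : 0 ≤ p) {y : Fin n → ℂ} (hy : y ≠ 0) :
    monomialNormRpow a p y ≤ ‖y‖ ^ (-(p - ∑ k, (a k : ℝ))) := by
  have hy : 0 < ‖y‖ := norm_pos_iff.2 hy
  have hprod : ∏ k, ‖y k‖ ^ a k ≤ ‖y‖ ^ ∑ k, a k := by
    rw [← Finset.prod_pow_eq_pow_sum]
    exact Finset.prod_le_prod (fun k _ => by positivity)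
      fun k _ => pow_le_pow_left₀ (norm_nonneg _) (norm_le_pi_norm y k) _
  rw [neg_sub, Real.rpow_sub hy, ← Nat.cast_sum, Real.rpow_natCast, div_eq_mul_inv,
    ← Real.rpow_neg hy.le]
  exact mul_le_mul hprod (Real.rpow_le_rpow_of_nonpos hy (norm_le_sqrt_sum_sq y) (neg_nonpos.2 hp))
    (by positivity) (by positivity)

lemma integrableOn_ball_monomialNormRpow (hn : 1 ≤ n) (hp : 0 ≤ p)
    (h : p < ∑ k, (a k : ℝ) + 2 * n) (r : ℝ) :
    IntegrableOn (monomialNormRpow a p) (ball 0 r) := by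
  have : NeZero n := ⟨by omega⟩
  refine integrableOn_ball_of_norm_le_rpow (C := 1) (α := p - ∑ k, (a k : ℝ)) ?_ ?_ ?_
    (measurable_monomialNormRpow a p).aestronglyMeasurable
  · rw [finrank_real_fin_fun_complex]; omega
  · rw [finrank_real_fin_fun_complex]; push_cast; linarith
  · refine ae_restrict_of_ae ((Measure.ae_ne volume 0).mono fun y hy => ?_)
    rw [one_mul, Real.norm_of_nonneg (monomialNormRpow_nonneg a p y)]
    exact monomialNormRpow_le_norm_rpow a p hp hy

lemma not_integrableOn_ball_monomialNormRpow (hn : 1 ≤ n) (h : ∑ k, (a k : ℝ) + 2 * n ≤ p) :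
    ¬ IntegrableOn (monomialNormRpow a p) (ball 0 1) := by
  intro hf
  have hvanish := ae_eq_zero_on_shell_of_homogeneous one_pos (α := p - ∑ k, (a k : ℝ))
    (by rw [finrank_real_fin_fun_complex]; push_cast; linarith) (monomialNormRpow_nonneg a p)
    (fun _ ht => monomialNormRpow_smul a p ht) hf
  set U : Set (Fin n → ℂ) := Set.univ.pi fun _ => {z | 1 / 2 < ‖z‖ ∧ ‖z‖ < 1}
  have hU_open : IsOpen U := isOpen_set_pi Set.finite_univ fun _ _ =>
    (isOpen_lt continuous_const continuous_norm).inter (isOpen_lt continuous_norm continuous_const)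
  have hU_ne : U.Nonempty := ⟨fun _ => 3 / 4, fun _ _ => by norm_num⟩
  have hU_shell : U ⊆ ball 0 1 \ ball 0 (1 / 2) := fun y hy => by
    simp only [U, Set.mem_univ_pi, Set.mem_ofPred_eq] at hy
    refine ⟨mem_ball_zero_iff.2 ((pi_norm_lt_iff one_pos).2 fun k => (hy k).2), ?_⟩
    rw [mem_ball_zero_iff, not_lt]
    exact (hy ⟨0, hn⟩).1.le.trans (norm_le_pi_norm y _)
  have hU_pos : ∀ y ∈ U, 0 < monomialNormRpow a p y := fun y hy => by
    simp only [U, Set.mem_univ_pi, Set.mem_ofPred_eq] at hy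
    have hy0 : 0 < ‖y‖ := (one_half_pos.trans (hy ⟨0, hn⟩).1).trans_le (norm_le_pi_norm y _)
    exact mul_pos (Finset.prod_pos fun k _ => pow_pos (one_half_pos.trans (hy k).1) _)
      (Real.rpow_pos_of_pos (hy0.trans_le (norm_le_sqrt_sum_sq y)) _)
  have hU_null : volume U = 0 := by
    have hzero : ∀ᵐ y, y ∈ U → monomialNormRpow a p y = 0 :=
      (ae_restrict_iff' hU_open.measurableSet).1
        (ae_restrict_of_ae_restrict_of_subset hU_shell hvanish)
    refine measure_mono_null (fun y hy => ?_) (ae_iff.1 hzero)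
    exact fun hy0 => (hU_pos y hy).ne' (hy0 hy)
  exact (hU_open.measure_pos volume hU_ne).ne' hU_null

theorem integrableOn_ball_monomialNormRpow_iff (hn : 1 ≤ n) (hp : 0 ≤ p) :
    IntegrableOn (monomialNormRpow a p) (ball 0 1) ↔ p < ∑ k, (a k : ℝ) + 2 * n :=
  ⟨fun hf => not_le.1 fun h => not_integrableOn_ball_monomialNormRpow a p hn h hf,
    fun h => integrableOn_ball_monomialNormRpow a p hn hp h 1⟩

end Polydisc

theorem polydisc_integral_finite_iff_general
    (n : ℕ) (hn : 1 ≤ n) (b A : ℝ) (hbA : (n : ℝ) ≤ b * A)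
    (r : Fin n → ℕ) :
    IntegrableOn
      (fun y : Fin n → ℂ =>
        (∏ k, ‖y k‖ ^ (2 * r k)) *
          Real.sqrt (∑ k, ‖y k‖ ^ 2) ^ (-(2 * b * A)))
      {y : Fin n → ℂ | ∀ k, ‖y k‖ < 1} volume ↔
    (⌊b * A⌋ - n + 1 : ℤ) ≤ ∑ j, (r j : ℤ) := by
  have hpolydisc : {y : Fin n → ℂ | ∀ k, ‖y k‖ < 1} = ball 0 1 := by
    ext y; simp [pi_norm_lt_iff one_pos]
  have hp : 0 ≤ 2 * b * A := by linarith [n.cast_nonneg (α := ℝ)]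
  rw [hpolydisc]
  refine (integrableOn_ball_monomialNormRpow_iff (fun k => 2 * r k) _ hn hp).trans ?_
  rw [show ⌊b * A⌋ - n + 1 ≤ ∑ j, (r j : ℤ) ↔ ⌊b * A⌋ < ∑ j, (r j : ℤ) + n by omega,
    Int.floor_lt]
  push_cast
  rw [← Finset.mul_sum]
  constructor <;> intro h <;> linarith

/-- The integral over the unit polydisc in ℂⁿ of ∏ |y_k|^{2 r_k} · |y|^{-2bA} (with |y| the
Euclidean norm) is finite iff ∑ r_j ≥ ⌊bA⌋ - n + 1. -/
theorem polydisc_integral_finite_iff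
    (n : ℕ) (hn : 1 ≤ n) (b A : ℝ) (hb : 0 < b) (hA : 0 < A) (hbA : (n : ℝ) ≤ b * A)
    (r : Fin n → ℕ) :
    IntegrableOn
      (fun y : Fin n → ℂ =>
        (∏ k, ‖y k‖ ^ (2 * r k)) *
          Real.sqrt (∑ k, ‖y k‖ ^ 2) ^ (-(2 * b * A)))
      {y : Fin n → ℂ | ∀ k, ‖y k‖ < 1} volume ↔
    (⌊b * A⌋ - n + 1 : ℤ) ≤ ∑ j, (r j : ℤ) :=
  polydisc_integral_finite_iff_general n hn b A hbA r
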